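/- arXiv:2310.00101 — 3 statements merged into one kernel-verified Lean document; each statement's English description precedes it below -/
import Mathlib

section
/- Let R be a commutative ring, n ≥ 3 and 1 ≤ m ≤ n−1. For 1 ≤ i ≠ j ≤ n and ξ ∈ R, the m-th exterior power of the elementary transvection t_{i,j}(ξ) is given, in the basis {e_I} of ⋀^m R^n, by ⋀^m t_{i,j}(ξ) = id + ξ·Σ_L sign(L,i)·sign(L,j)·E_{L∪{i}, L∪{j}}, where the sum ranges over all (m−1)-element subsets L of [n]∖{i,j}, E_{A,B} denotes the endomorphism sending e_B to e_A and all other basis vectors to 0, and sign(L,a) := (−1)^{#{l ∈ L : l < a}}. Equivalently, ⋀^m t_{i,j}(ξ) is the product over all such L of the transvections T_{L∪{i},L∪{j}}(sign(L,i)sign(L,j)ξ) := id + sign(L,i)sign(L,j)ξ·E_{L∪{i},L∪{j}}, and these factors pairwise commute. -/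
/-!
The `(I, J)` minor of `transvection i j ξ = 1 + ξ E_{ij}` is the `(I, J)` minor of the identity
plus, when `i ∈ I` and `j ∈ J`, a single entry `ξ` in the row of `i` and the column of `j`.
Expanding along that row, the correction is `ξ` times a signed minor of the identity on
`I \ {i}`, `J \ {j}`: it is nonzero exactly when `I \ {i} = J \ {j} = L`, and the sign
`(-1)^(pos_I i + pos_J j)` is `sign(L, i) sign(L, j)`. For `i ≠ j` the parts
`E_{L ∪ {i}, L ∪ {j}}` multiply to zero pairwise since `i ∉ L ∪ {j}`, so the factors
`1 + u_L` commute and their product is `1 + Σ u_L`.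
-/

open Matrix Finset

/-- The set of `m`-element subsets of `Fin n`, indexing the standard basis `e_I` of `⋀^m R^n`. -/
abbrev MSub (n m : ℕ) := {s : Finset (Fin n) // s.card = m}

/-- The matrix of the `m`-th exterior power `⋀^m g` of `g` in the standard basis `e_I` of
`⋀^m R^n`: its `(I, J)` entry is the `m × m` minor of `g` with rows `I` and columns `J`. -/
def extPow {R : Type*} [CommRing R] (n m : ℕ) (g : Matrix (Fin n) (Fin n) R) :
    Matrix (MSub n m) (MSub n m) R :=
  Matrix.of fun I J =>
    (Matrix.of fun a b : Fin m => g (I.1.orderEmbOfFin I.2 a) (J.1.orderEmbOfFin J.2 b)).det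

/-- `sign(L, a) = (−1)^{#{l ∈ L : l < a}}`. -/
def sgn {R : Type*} [CommRing R] {n : ℕ} (L : Finset (Fin n)) (a : Fin n) : R :=
  (-1 : R) ^ (L.filter fun l => l < a).card

/-- The endomorphism `E_{A,B}` of `⋀^m R^n` sending `e_B` to `e_A` and all other basis
vectors to `0`, written as a matrix in the basis `e_I` (zero if `A` or `B` does not have
cardinality `m`). -/
def finsetUnit (R : Type*) [CommRing R] (n m : ℕ) (A B : Finset (Fin n)) :
    Matrix (MSub n m) (MSub n m) R :=
  Matrix.of fun I J => if I.1 = A ∧ J.1 = B then 1 else 0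

/-- The transvection `T_{L∪{i},L∪{j}}(sign(L,i)·sign(L,j)·ξ)` of `⋀^m R^n`. -/
def extTransvection (R : Type*) [CommRing R] (n m : ℕ) (i j : Fin n) (ξ : R)
    (L : Finset (Fin n)) : Matrix (MSub n m) (MSub n m) R :=
  1 + (sgn L i * sgn L j * ξ) • finsetUnit R n m (insert i L) (insert j L)

theorem Commute.of_sub_one_mul_sub_one {M : Type*} [Ring M] {a b : M}
    (hab : (a - 1) * (b - 1) = 0) (hba : (b - 1) * (a - 1) = 0) : Commute a b := by
  have h : Commute (a - 1) (b - 1) := hab.trans hba.symm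
  simpa using (h.add_right (Commute.one_right _)).add_left (Commute.one_left _)

theorem Finset.noncommProd_eq_one_add_sum_sub_one {ι M : Type*} [Ring M] (s : Finset ι)
    {f : ι → M} (hf : ∀ a ∈ s, ∀ b ∈ s, (f a - 1) * (f b - 1) = 0)
    (hcomm : (s : Set ι).Pairwise fun a b => Commute (f a) (f b)) :
    s.noncommProd f hcomm = 1 + ∑ a ∈ s, (f a - 1) := by
  classical
  induction s using Finset.induction_on with
  | empty => simp
  | @insert a s ha ih =>
    rw [noncommProd_insert_of_notMem _ _ _ _ ha,
      ih (fun x hx y hy => hf x (mem_insert_of_mem hx) y (mem_insert_of_mem hy)), sum_insert ha]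
    have hz : (f a - 1) * ∑ b ∈ s, (f b - 1) = 0 := by
      rw [mul_sum]
      exact sum_eq_zero fun b hb => hf a (mem_insert_self a s) b (mem_insert_of_mem hb)
    have h : f a * (1 + ∑ b ∈ s, (f b - 1)) - (1 + (f a - 1 + ∑ b ∈ s, (f b - 1))) =
        (f a - 1) * ∑ b ∈ s, (f b - 1) := by noncomm_ring
    exact sub_eq_zero.mp (h.trans hz)

section OrderEmbOfFin

variable {α : Type*} [LinearOrder α] {k : ℕ}

theorem Finset.card_filter_lt_orderEmbOfFin (s : Finset α) (h : #s = k) (a : Fin k) :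
    #{x ∈ s | x < s.orderEmbOfFin h a} = a := by
  have : {x ∈ s | x < s.orderEmbOfFin h a} = (Iio a).map (s.orderEmbOfFin h).toEmbedding := by
    ext x
    simp only [mem_filter, mem_map, mem_Iio, RelEmbedding.coe_toEmbedding]
    constructor
    · rintro ⟨hx, hlt⟩
      obtain ⟨b, rfl⟩ : x ∈ Set.range (s.orderEmbOfFin h) := by rwa [range_orderEmbOfFin]
      exact ⟨b, (s.orderEmbOfFin h).lt_iff_lt.mp hlt, rfl⟩
    · rintro ⟨b, hb, rfl⟩
      exact ⟨orderEmbOfFin_mem _ _ _, (s.orderEmbOfFin h).lt_iff_lt.mpr hb⟩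
  rw [this, card_map, Fin.card_Iio]

theorem Finset.orderEmbOfFin_erase (s : Finset α) (h : #s = k + 1) (a : Fin (k + 1))
    (h' : #(s.erase (s.orderEmbOfFin h a)) = k) :
    ⇑((s.erase (s.orderEmbOfFin h a)).orderEmbOfFin h') = s.orderEmbOfFin h ∘ a.succAbove :=
  (orderEmbOfFin_unique h'
    (fun b => mem_erase.mpr ⟨(s.orderEmbOfFin h).injective.ne (a.succAbove_ne b),
      orderEmbOfFin_mem _ _ _⟩)
    ((s.orderEmbOfFin h).strictMono.comp a.strictMono_succAbove)).symm

theorem Matrix.det_submatrix_one_orderEmbOfFin {R : Type*} [CommRing R] (S T : Finset α)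
    (hS : #S = k) (hT : #T = k) :
    ((1 : Matrix α α R).submatrix (S.orderEmbOfFin hS) (T.orderEmbOfFin hT)).det =
      if S = T then 1 else 0 := by
  split_ifs with hST
  · subst hST
    exact (congrArg det (submatrix_one_embedding (S.orderEmbOfFin hS).toEmbedding)).trans det_one
  · obtain ⟨x, hxS, hxT⟩ : ∃ x ∈ S, x ∉ T := not_subset.mp fun hsub =>
      hST (eq_of_subset_of_card_le hsub (hS.trans hT.symm).ge)
    obtain ⟨a, rfl⟩ : x ∈ Set.range (S.orderEmbOfFin hS) := by rwa [range_orderEmbOfFin]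
    refine det_eq_zero_of_row_eq_zero a fun b => one_apply_ne ?_
    exact fun hab => hxT (hab ▸ orderEmbOfFin_mem T hT b)

end OrderEmbOfFin

theorem Matrix.det_add_single {n R : Type*} [Fintype n] [DecidableEq n] [CommRing R]
    (A : Matrix n n R) (a b : n) (c : R) :
    (A + single a b c).det = A.det + c * A.adjugate b a := by
  have : A + single a b c = A.updateRow a (A a + c • Pi.single b 1) := by
    ext x y
    by_cases hx : x = a
    · subst hx; simp [single_apply, Pi.single_apply, eq_comm]
    · simp [updateRow_ne hx, Ne.symm hx]
  rw [this, det_updateRow_add, updateRow_eq_self, det_updateRow_smul, adjugate_apply]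

theorem Matrix.submatrix_single_of_injective {l m n o α : Type*} [DecidableEq l] [DecidableEq m]
    [DecidableEq n] [DecidableEq o] [Zero α] {f : l → n} {g : m → o} (hf : f.Injective)
    (hg : g.Injective) (a : l) (b : m) (r : α) :
    (single (f a) (g b) r).submatrix f g = single a b r := by
  ext x y
  simp [single_apply, hf.eq_iff, hg.eq_iff]

section ExteriorPower

variable {R : Type*} [CommRing R] {n m k : ℕ}

theorem sgn_erase_orderEmbOfFin (I : Finset (Fin n)) (hI : #I = k) (a : Fin k) :
    (sgn (I.erase (I.orderEmbOfFin hI a)) (I.orderEmbOfFin hI a) : R) = (-1) ^ (a : ℕ) := by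
  rw [sgn, filter_erase, erase_eq_of_notMem (by simp), card_filter_lt_orderEmbOfFin]

theorem det_submatrix_transvection (i j : Fin n) (ξ : R) (I J : Finset (Fin n)) (hI : #I = k)
    (hJ : #J = k) :
    ((transvection i j ξ).submatrix (I.orderEmbOfFin hI) (J.orderEmbOfFin hJ)).det =
      (if I = J then 1 else 0) +
        ξ * if i ∈ I ∧ j ∈ J ∧ I.erase i = J.erase j then sgn (I.erase i) i * sgn (I.erase i) j
          else 0 := by
  have hsplit : (transvection i j ξ).submatrix (I.orderEmbOfFin hI) (J.orderEmbOfFin hJ) =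
      (1 : Matrix (Fin n) (Fin n) R).submatrix (I.orderEmbOfFin hI) (J.orderEmbOfFin hJ) +
        (single i j ξ).submatrix (I.orderEmbOfFin hI) (J.orderEmbOfFin hJ) := rfl
  rw [hsplit]
  by_cases hij : i ∈ I ∧ j ∈ J
  · obtain ⟨hi, hj⟩ := hij
    obtain ⟨a, rfl⟩ : i ∈ Set.range (I.orderEmbOfFin hI) := by rwa [range_orderEmbOfFin]
    obtain ⟨b, rfl⟩ : j ∈ Set.range (J.orderEmbOfFin hJ) := by rwa [range_orderEmbOfFin]
    obtain _ | k := k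
    · exact a.elim0
    have hI' : #(I.erase (I.orderEmbOfFin hI a)) = k := by simp [hI]
    have hJ' : #(J.erase (J.orderEmbOfFin hJ b)) = k := by simp [hJ]
    rw [submatrix_single_of_injective (I.orderEmbOfFin hI).injective
        (J.orderEmbOfFin hJ).injective, det_add_single, det_submatrix_one_orderEmbOfFin,
      adjugate_fin_succ_eq_det_submatrix, submatrix_submatrix, ← orderEmbOfFin_erase I hI a hI',
      ← orderEmbOfFin_erase J hJ b hJ', det_submatrix_one_orderEmbOfFin]
    by_cases hE : I.erase (I.orderEmbOfFin hI a) = J.erase (J.orderEmbOfFin hJ b)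
    · rw [if_pos hE, if_pos (And.intro hi (And.intro hj hE)), sgn_erase_orderEmbOfFin, hE,
        sgn_erase_orderEmbOfFin, mul_one, pow_add, mul_comm]
    · rw [if_neg hE, if_neg (not_and_of_not_right _ (not_and_of_not_right _ hE)), mul_zero]
  · have hzero : (single i j ξ).submatrix (I.orderEmbOfFin hI) (J.orderEmbOfFin hJ) = 0 := by
      ext x y
      simp only [submatrix_apply, single_apply, Matrix.zero_apply, ite_eq_right_iff, and_imp]
      rintro rfl rfl
      exact absurd ⟨orderEmbOfFin_mem I hI x, orderEmbOfFin_mem J hJ y⟩ hij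
    have hcond : ¬(i ∈ I ∧ j ∈ J ∧ I.erase i = J.erase j) := fun h => hij ⟨h.1, h.2.1⟩
    rw [hzero, add_zero, det_submatrix_one_orderEmbOfFin, if_neg hcond, mul_zero, add_zero]

theorem mem_powersetCard_univ_sdiff_pair {i j : Fin n} {L : Finset (Fin n)} :
    L ∈ powersetCard k (univ \ {i, j}) ↔ i ∉ L ∧ j ∉ L ∧ #L = k := by
  simp [mem_powersetCard, subset_sdiff, and_assoc]

theorem sum_smul_finsetUnit_apply (i j : Fin n) (f : Finset (Fin n) → R) (I J : MSub n m) :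
    (∑ L ∈ powersetCard (m - 1) (univ \ {i, j}),
        f L • finsetUnit R n m (insert i L) (insert j L)) I J =
      if i ∈ I.1 ∧ j ∈ J.1 ∧ I.1.erase i = J.1.erase j then f (I.1.erase i) else 0 := by
  simp only [Matrix.sum_apply, Matrix.smul_apply, finsetUnit, of_apply, smul_eq_mul, mul_ite,
    mul_one, mul_zero]
  split_ifs with hC
  · obtain ⟨hi, hj, hE⟩ := hC
    have hL : I.1.erase i ∈ powersetCard (m - 1) (univ \ {i, j}) := by
      refine mem_powersetCard_univ_sdiff_pair.mpr ⟨notMem_erase i _, ?_, by simp [hi, I.2]⟩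
      exact hE ▸ notMem_erase j _
    rw [sum_eq_single_of_mem _ hL, if_pos ⟨(insert_erase hi).symm, hE ▸ (insert_erase hj).symm⟩]
    intro L hLP hne
    rw [if_neg]
    rintro ⟨hIL, -⟩
    exact hne (by rw [hIL, erase_insert (mem_powersetCard_univ_sdiff_pair.mp hLP).1])
  · refine sum_eq_zero fun L hL => if_neg ?_
    rintro ⟨hIL, hJL⟩
    obtain ⟨hiL, hjL, -⟩ := mem_powersetCard_univ_sdiff_pair.mp hL
    exact hC ⟨hIL ▸ mem_insert_self i L, hJL ▸ mem_insert_self j L,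
      by rw [hIL, hJL, erase_insert hiL, erase_insert hjL]⟩

theorem finsetUnit_mul_finsetUnit_of_ne {A B A' B' : Finset (Fin n)} (h : B ≠ A') :
    finsetUnit R n m A B * finsetUnit R n m A' B' = 0 := by
  ext I J
  simp only [mul_apply, finsetUnit, of_apply, Matrix.zero_apply]
  refine sum_eq_zero fun K _ => ?_
  split_ifs with h1 h2 <;> first | exact absurd (h1.2.symm.trans h2.1) h | simp

theorem extPow_transvection (i j : Fin n) (ξ : R) :
    extPow n m (transvection i j ξ) =
      1 + ξ • ∑ L ∈ powersetCard (m - 1) (univ \ {i, j}),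
        (sgn L i * sgn L j : R) • finsetUnit R n m (insert i L) (insert j L) := by
  ext I J
  rw [Matrix.add_apply, Matrix.smul_apply, sum_smul_finsetUnit_apply, one_apply, smul_eq_mul]
  exact (det_submatrix_transvection i j ξ I.1 J.1 I.2 J.2).trans (by simp [Subtype.ext_iff])

theorem extTransvection_sub_one (i j : Fin n) (ξ : R) (L : Finset (Fin n)) :
    extTransvection R n m i j ξ L - 1 =
      (sgn L i * sgn L j * ξ) • finsetUnit R n m (insert i L) (insert j L) :=
  add_sub_cancel_left _ _

theorem extTransvection_sub_one_mul_sub_one {i j : Fin n} (hij : i ≠ j) (ξ : R)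
    {L : Finset (Fin n)} (hiL : i ∉ L) (L' : Finset (Fin n)) :
    (extTransvection R n m i j ξ L - 1) * (extTransvection R n m i j ξ L' - 1) = 0 := by
  have hne : insert j L ≠ insert i L' := fun h =>
    (mem_insert.mp (h ▸ mem_insert_self i L')).elim hij hiL
  rw [extTransvection_sub_one, extTransvection_sub_one, smul_mul_smul_comm,
    finsetUnit_mul_finsetUnit_of_ne hne, smul_zero]

end ExteriorPower

theorem exterior_power_of_transvection_general {R : Type*} [CommRing R] (n m : ℕ)
    (i j : Fin n) (hij : i ≠ j) (ξ : R) :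
    extPow n m (Matrix.transvection i j ξ) =
        1 + ξ • ∑ L ∈ Finset.powersetCard (m - 1) (Finset.univ \ {i, j}),
          (sgn L i * sgn L j : R) • finsetUnit R n m (insert i L) (insert j L) ∧
      (∀ L ∈ Finset.powersetCard (m - 1) ((Finset.univ : Finset (Fin n)) \ {i, j}),
        ∀ L' ∈ Finset.powersetCard (m - 1) ((Finset.univ : Finset (Fin n)) \ {i, j}),
          Commute (extTransvection R n m i j ξ L) (extTransvection R n m i j ξ L')) ∧
      ∀ (hcomm : ((Finset.powersetCard (m - 1) ((Finset.univ : Finset (Fin n)) \ {i, j}) :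
            Finset (Finset (Fin n))) : Set (Finset (Fin n))).Pairwise
          fun L L' => Commute (extTransvection R n m i j ξ L) (extTransvection R n m i j ξ L')),
        extPow n m (Matrix.transvection i j ξ) =
          (Finset.powersetCard (m - 1) ((Finset.univ : Finset (Fin n)) \ {i, j})).noncommProd
            (extTransvection R n m i j ξ) hcomm := by
  have hsq : ∀ L ∈ powersetCard (m - 1) (univ \ {i, j}),
      ∀ L' ∈ powersetCard (m - 1) (univ \ {i, j}),
      (extTransvection R n m i j ξ L - 1) * (extTransvection R n m i j ξ L' - 1) = 0 :=
    fun L hL L' _ =>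
      extTransvection_sub_one_mul_sub_one hij ξ (mem_powersetCard_univ_sdiff_pair.mp hL).1 L'
  refine ⟨extPow_transvection i j ξ,
    fun L hL L' hL' => .of_sub_one_mul_sub_one (hsq L hL L' hL') (hsq L' hL' L hL),
    fun hcomm => ?_⟩
  rw [noncommProd_eq_one_add_sum_sub_one _ hsq, extPow_transvection, smul_sum]
  simp only [extTransvection_sub_one, smul_smul, mul_comm ξ]

theorem exterior_power_of_transvection {R : Type*} [CommRing R] (n m : ℕ)
    (hn : 3 ≤ n) (hm1 : 1 ≤ m) (hm2 : m ≤ n - 1) (i j : Fin n) (hij : i ≠ j) (ξ : R) :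
    extPow n m (Matrix.transvection i j ξ) =
        1 + ξ • ∑ L ∈ Finset.powersetCard (m - 1) (Finset.univ \ {i, j}),
          (sgn L i * sgn L j : R) • finsetUnit R n m (insert i L) (insert j L) ∧
      (∀ L ∈ Finset.powersetCard (m - 1) ((Finset.univ : Finset (Fin n)) \ {i, j}),
        ∀ L' ∈ Finset.powersetCard (m - 1) ((Finset.univ : Finset (Fin n)) \ {i, j}),
          Commute (extTransvection R n m i j ξ L) (extTransvection R n m i j ξ L')) ∧
      ∀ (hcomm : ((Finset.powersetCard (m - 1) ((Finset.univ : Finset (Fin n)) \ {i, j}) :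
            Finset (Finset (Fin n))) : Set (Finset (Fin n))).Pairwise
          fun L L' => Commute (extTransvection R n m i j ξ L) (extTransvection R n m i j ξ L')),
        extPow n m (Matrix.transvection i j ξ) =
          (Finset.powersetCard (m - 1) ((Finset.univ : Finset (Fin n)) \ {i, j})).noncommProd
            (extTransvection R n m i j ξ) hcomm :=
  exterior_power_of_transvection_general n m i j hij ξ
end

section
/- Let K be an algebraically closed field and 1 ≤ m ≤ n−1. (a) An element g ∈ GL_n(K) satisfies ⋀^m g = id on ⋀^m K^n if and only if g = ξ·1_n for a scalar ξ ∈ K with ξ^m = 1; that is, the kernel of ⋀^m : GL_n(K) → GL(⋀^m K^n) equals μ_m(K) := {ξ·1_n : ξ^m = 1}. (b) The kernel of the restriction of ⋀^m to SL_n(K) equals μ_d(K) := {ξ·1_n : ξ^d = 1}, where d = gcd(n,m). -/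
/-! `⋀^m g = 1` says that every `m × m` minor of `g`, taken along injective row and column maps
`Fin m ↪ Fin n`, equals the corresponding minor of `1`. Given `k ≠ j`, choose `c : Fin m ↪ Fin n`
whose range contains `j` but not `k`. Then `A = g[c, c]` has determinant `1`, while replacing any
row of `A` by `g[k, c]` gives a minor of `g` whose rows and columns are indexed by different sets,
hence `0`; by Cramer's rule `g[k, c] = 0`. So `g` is diagonal with every product of `m` distinct
diagonal entries equal to `1`, and exchanging one factor (possible as `m < n`) shows that all
diagonal entries agree. On `SL_n` moreover `ξ ^ n = det g = 1`, and `ξ ^ m = ξ ^ n = 1` if and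
only if `ξ ^ gcd(n, m) = 1`. -/

open Matrix Finset

theorem Matrix.eq_zero_of_det_updateRow_eq_zero {ι R : Type*} [Fintype ι] [DecidableEq ι]
    [CommRing R] {A : Matrix ι ι R} (hA : IsUnit A.det) {v : ι → R}
    (h : ∀ i, (A.updateRow i v).det = 0) : v = 0 := by
  have hcramer : Aᵀ.cramer v = 0 := funext fun i => by rw [cramer_transpose_apply]; exact h i
  have := mulVec_cramer Aᵀ v
  rwa [hcramer, mulVec_zero, det_transpose, eq_comm, hA.smul_eq_zero] at this

theorem exists_embedding_fin_mem_range_notMem_range {m n : ℕ} (hm : 1 ≤ m) (hmn : m < n)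
    {j k : Fin n} (hjk : j ≠ k) :
    ∃ (c : Fin m ↪ Fin n) (a : Fin m), c a = j ∧ k ∉ Set.range c := by
  obtain ⟨J, hjJ, hJk, hJ⟩ := exists_subsuperset_card_eq (s := {j}) (t := univ.erase k)
    (by simpa using hjk) (by simpa using hm) (by simp; omega)
  have hrange : Set.range (J.orderEmbOfFin hJ) = J := J.range_orderEmbOfFin hJ
  obtain ⟨a, ha⟩ : j ∈ Set.range (J.orderEmbOfFin hJ) := hrange ▸ hjJ (mem_singleton_self j)
  refine ⟨(J.orderEmbOfFin hJ).toEmbedding, a, ha, ?_⟩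
  rw [RelEmbedding.coe_toEmbedding, hrange, mem_coe]
  exact fun hk => (mem_erase.mp (hJk hk)).1 rfl

theorem exists_perm_eq_orderEmbOfFin_comp {m n : ℕ} (r : Fin m ↪ Fin n) {I : Finset (Fin n)}
    (hI : I.card = m) (hr : ∀ a, r a ∈ I) :
    ∃ σ : Equiv.Perm (Fin m), ⇑r = I.orderEmbOfFin hI ∘ σ := by
  have hmono : StrictMono (r ∘ Tuple.sort r) :=
    (Tuple.monotone_sort r).strictMono_of_injective (r.injective.comp (Tuple.sort r).injective)
  refine ⟨(Tuple.sort r)⁻¹, ?_⟩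
  rw [← orderEmbOfFin_unique hI (fun a => hr _) hmono]
  ext a; simp

section

variable {R : Type*} [CommRing R] {n m : ℕ}

theorem extPow_apply (g : Matrix (Fin n) (Fin n) R) (I J : MSub n m) :
    extPow n m g I J = (g.submatrix (I.1.orderEmbOfFin I.2) (J.1.orderEmbOfFin J.2)).det :=
  rfl

theorem det_submatrix_eq_of_extPow_eq {g h : Matrix (Fin n) (Fin n) R}
    (H : extPow n m g = extPow n m h) (r c : Fin m ↪ Fin n) :
    (g.submatrix r c).det = (h.submatrix r c).det := by
  let I : MSub n m := ⟨univ.map r, by simp⟩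
  let J : MSub n m := ⟨univ.map c, by simp⟩
  obtain ⟨σ, hσ⟩ := exists_perm_eq_orderEmbOfFin_comp r I.2 fun a => mem_map_of_mem r (mem_univ a)
  obtain ⟨τ, hτ⟩ := exists_perm_eq_orderEmbOfFin_comp c J.2 fun a => mem_map_of_mem c (mem_univ a)
  have hsign : ∀ M : Matrix (Fin n) (Fin n) R,
      (M.submatrix r c).det = Equiv.Perm.sign τ * (Equiv.Perm.sign σ * extPow n m M I J) := by
    intro M
    rw [extPow_apply, ← det_permute, ← det_permute', hσ, hτ]
    rfl
  rw [hsign, hsign, H]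

theorem extPow_smul (ξ : R) (g : Matrix (Fin n) (Fin n) R) :
    extPow n m (ξ • g) = ξ ^ m • extPow n m g := by
  ext I J
  rw [Matrix.smul_apply, extPow_apply, extPow_apply,
    show (ξ • g).submatrix _ _ = ξ • g.submatrix _ _ from rfl, det_smul, Fintype.card_fin,
    smul_eq_mul]

theorem extPow_one : extPow n m (1 : Matrix (Fin n) (Fin n) R) = 1 := by
  ext I J
  rw [extPow_apply]
  by_cases hIJ : I = J
  · subst hIJ
    rw [one_apply_eq, ← RelEmbedding.coe_toEmbedding, submatrix_one_embedding, det_one]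
  · rw [one_apply_ne hIJ]
    obtain ⟨x, hxI, hxJ⟩ : ∃ x ∈ I.1, x ∉ J.1 := not_subset.mp fun hsub =>
      hIJ (Subtype.ext (eq_of_subset_of_card_le hsub (by rw [I.2, J.2])))
    obtain ⟨a, rfl⟩ : x ∈ Set.range (I.1.orderEmbOfFin I.2) := by rwa [range_orderEmbOfFin]
    exact det_eq_zero_of_row_eq_zero a fun b =>
      one_apply_ne fun h => hxJ (h ▸ orderEmbOfFin_mem _ _ b)

theorem apply_eq_zero_of_extPow_eq_one (hm : 1 ≤ m) (hmn : m < n) {g : Matrix (Fin n) (Fin n) R}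
    (H : extPow n m g = 1) {k j : Fin n} (hkj : k ≠ j) : g k j = 0 := by
  obtain ⟨c, a, rfl, hk⟩ := exists_embedding_fin_mem_range_notMem_range hm hmn hkj.symm
  have hminor := det_submatrix_eq_of_extPow_eq (H.trans extPow_one.symm)
  have hA : IsUnit (g.submatrix c c).det := by
    rw [hminor, submatrix_one_embedding, det_one]
    exact isUnit_one
  have hrow : ∀ i, ((g.submatrix c c).updateRow i fun b => g k (c b)).det = 0 := by
    intro i
    have hupd : (g.submatrix c c).updateRow i (fun b => g k (c b)) =
        g.submatrix (c.setValue i k) c := by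
      ext a b
      rcases eq_or_ne a i with rfl | hai
      · simp
      · simp [updateRow_ne hai, Function.Embedding.setValue_eq_of_ne hai fun h => hk ⟨a, h⟩]
    rw [hupd, hminor]
    refine det_eq_zero_of_row_eq_zero i fun b => ?_
    rw [submatrix_apply, Function.Embedding.setValue_eq]
    exact one_apply_ne fun h => hk ⟨b, h.symm⟩
  exact congrFun (eq_zero_of_det_updateRow_eq_zero hA hrow) a

theorem prod_apply_self_eq_one_of_extPow_eq_one (hm : 1 ≤ m) (hmn : m < n)
    {g : Matrix (Fin n) (Fin n) R} (H : extPow n m g = 1) (c : Fin m ↪ Fin n) :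
    ∏ a, g (c a) (c a) = 1 := by
  have hg : g = diagonal fun i => g i i := by
    ext i j
    rcases eq_or_ne i j with rfl | h
    · simp
    · simp [h, apply_eq_zero_of_extPow_eq_one hm hmn H h]
  have hdet := det_submatrix_eq_of_extPow_eq (H.trans extPow_one.symm) c c
  rw [submatrix_one_embedding, det_one, hg, submatrix_diagonal_embedding, det_diagonal] at hdet
  simpa using hdet

theorem apply_self_eq_of_extPow_eq_one (hm : 1 ≤ m) (hmn : m < n) {g : Matrix (Fin n) (Fin n) R}
    (H : extPow n m g = 1) (i k : Fin n) : g i i = g k k := by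
  rcases eq_or_ne i k with rfl | hik
  · rfl
  obtain ⟨c, a, rfl, hk⟩ := exists_embedding_fin_mem_range_notMem_range hm hmn hik
  have h₁ := prod_apply_self_eq_one_of_extPow_eq_one hm hmn H c
  have h₂ := prod_apply_self_eq_one_of_extPow_eq_one hm hmn H (c.setValue a k)
  rw [← mul_prod_erase univ _ (mem_univ a)] at h₁ h₂
  rw [Function.Embedding.setValue_eq, prod_congr rfl fun b hb => by
    rw [Function.Embedding.setValue_eq_of_ne (ne_of_mem_erase hb) fun h => hk ⟨b, h⟩]] at h₂
  exact left_inv_eq_right_inv h₁ ((mul_comm _ _).trans h₂)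

theorem extPow_eq_one_iff (hm : 1 ≤ m) (hmn : m < n) {g : Matrix (Fin n) (Fin n) R} :
    extPow n m g = 1 ↔ ∃ ξ : R, ξ ^ m = 1 ∧ g = ξ • 1 := by
  constructor
  · intro H
    let i₀ : Fin n := ⟨0, by omega⟩
    have hdiag := apply_self_eq_of_extPow_eq_one hm hmn H
    refine ⟨g i₀ i₀, ?_, ?_⟩
    · simpa [hdiag _ i₀] using
        prod_apply_self_eq_one_of_extPow_eq_one hm hmn H (Fin.castLEEmb hmn.le)
    · ext i j
      rcases eq_or_ne i j with rfl | h
      · simp [hdiag _ i₀]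
      · simp [h, apply_eq_zero_of_extPow_eq_one hm hmn H h]
  · rintro ⟨ξ, hξ, rfl⟩
    rw [extPow_smul, extPow_one, hξ, one_smul]

end

theorem kernel_of_exterior_power_general {K : Type*} [Field K] (n m : ℕ)
    (hm1 : 1 ≤ m) (hm2 : m ≤ n - 1) :
    (∀ g : Matrix (Fin n) (Fin n) K, IsUnit g.det →
      (extPow n m g = 1 ↔ ∃ ξ : K, ξ ^ m = 1 ∧ g = ξ • (1 : Matrix (Fin n) (Fin n) K))) ∧
    ∀ g : Matrix (Fin n) (Fin n) K, g.det = 1 →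
      (extPow n m g = 1 ↔
        ∃ ξ : K, ξ ^ Nat.gcd n m = 1 ∧ g = ξ • (1 : Matrix (Fin n) (Fin n) K)) := by
  have hmn : m < n := by omega
  refine ⟨fun g _ => extPow_eq_one_iff hm1 hmn, fun g hdet => ?_⟩
  rw [extPow_eq_one_iff hm1 hmn]
  refine exists_congr fun ξ => ⟨?_, ?_⟩
  · rintro ⟨hξ, rfl⟩
    have hξn : ξ ^ n = 1 := by simpa [det_smul] using hdet
    exact ⟨pow_gcd_eq_one.mpr ⟨hξn, hξ⟩, rfl⟩
  · rintro ⟨hξ, rfl⟩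
    exact ⟨(pow_gcd_eq_one.mp hξ).2, rfl⟩

/-- Over an algebraically closed field: (a) the kernel of `⋀^m` on `GL_n(K)` consists of the
scalar matrices `ξ·1` with `ξ^m = 1`; (b) its kernel on `SL_n(K)` consists of the scalar
matrices `ξ·1` with `ξ^{gcd(n,m)} = 1`. -/
theorem kernel_of_exterior_power {K : Type*} [Field K] [IsAlgClosed K] (n m : ℕ)
    (hm1 : 1 ≤ m) (hm2 : m ≤ n - 1) :
    (∀ g : Matrix (Fin n) (Fin n) K, IsUnit g.det →
      (extPow n m g = 1 ↔ ∃ ξ : K, ξ ^ m = 1 ∧ g = ξ • (1 : Matrix (Fin n) (Fin n) K))) ∧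
    ∀ g : Matrix (Fin n) (Fin n) K, g.det = 1 →
      (extPow n m g = 1 ↔
        ∃ ξ : K, ξ ^ Nat.gcd n m = 1 ∧ g = ξ • (1 : Matrix (Fin n) (Fin n) K)) :=
  kernel_of_exterior_power_general n m hm1 hm2
end

section
/- Let R be a commutative ring and 1 ≤ m ≤ n−1. For a unit u ∈ R^×, the scalar automorphism u·id of ⋀^m R^n is of the form ⋀^m h for some h ∈ GL_n(R) if and only if u is an m-th power in R^×, i.e. u = v^m for some v ∈ R^×. (Consequently, the map u ↦ u·id induces an injective homomorphism from R^×/(R^×)^m into the quotient of the group of units-scaled transformations modulo the image subgroup ⋀^m(GL_n(R)).) -/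
open Matrix Finset

/-- Existence of an `m`-set containing `i` and avoiding `j`. -/
lemma exists_mset {n m : ℕ} (hm1 : 1 ≤ m) (hm2 : m ≤ n - 1) {i j : Fin n} (hij : i ≠ j) :
    ∃ I : Finset (Fin n), I.card = m ∧ i ∈ I ∧ j ∉ I := by
  obtain ⟨I, hsub, hsub2, hcard⟩ :=
    Finset.exists_subsuperset_card_eq (s := {i}) (t := Finset.univ.erase j)
      (by simp [hij]) (by simpa using hm1)
      (by simpa [Finset.card_erase_of_mem, Finset.card_univ] using hm2)
  exact ⟨I, hcard, hsub (by simp), fun hjI => by simpa using hsub2 hjI⟩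

/-- A product over a finset via its monotone enumeration. -/
lemma prod_orderEmbOfFin' {R : Type*} [CommMonoid R] {n m : ℕ} (I : Finset (Fin n))
    (hI : I.card = m) (f : Fin n → R) :
    ∏ a : Fin m, f (I.orderEmbOfFin hI a) = ∏ x ∈ I, f x := by
  refine Finset.prod_bij (fun (a : Fin m) _ => I.orderEmbOfFin hI a)
    (fun a _ => Finset.orderEmbOfFin_mem I hI a)
    (fun a _ b _ e => (I.orderEmbOfFin hI).injective e)
    (fun x hx => ?_) (fun a _ => rfl)
  have : x ∈ Set.range (I.orderEmbOfFin hI) := by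
    rw [Finset.range_orderEmbOfFin]; exact hx
  obtain ⟨a, ha⟩ := this
  exact ⟨a, Finset.mem_univ a, ha⟩

/-- Off-diagonal vanishing of entries of `h` when `⋀^m h` is a unit scalar. -/
lemma offdiag_zero {R : Type*} [CommRing R] {n m : ℕ} (h : Matrix (Fin n) (Fin n) R) (u : Rˣ)
    (hyp : ∀ I J : MSub n m, extPow n m h I J = if I = J then (u : R) else 0)
    {i j : Fin n} (I : Finset (Fin n)) (hI : I.card = m) (hiI : i ∈ I) (hjI : j ∉ I) :
    h j i = 0 := by
  set L : Finset (Fin n) := insert j I with hLdef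
  have hL : L.card = m + 1 := by rw [hLdef, Finset.card_insert_of_notMem hjI, hI]
  set fL := L.orderEmbOfFin hL with hfL
  set oeI := I.orderEmbOfFin hI with hoeI
  set col : Fin (m + 1) → Fin n := Fin.cases i oeI with hcol
  set M : Matrix (Fin (m + 1)) (Fin (m + 1)) R := h.submatrix fL col with hM
  -- M has two equal columns, hence det 0
  obtain ⟨k, hk⟩ : ∃ k, oeI k = i := by
    have : i ∈ Set.range oeI := by rw [hoeI, Finset.range_orderEmbOfFin]; exact hiI
    exact this
  have hdet0 : M.det = 0 := by
    refine Matrix.det_zero_of_column_eq (i := (0 : Fin (m + 1))) (j := k.succ)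
      (Fin.succ_ne_zero k).symm ?_
    intro a
    simp [hM, hcol, hk]
  -- Laplace expansion along column 0
  rw [Matrix.det_succ_column_zero] at hdet0
  -- identify each minor
  have hminor : ∀ r : Fin (m + 1),
      (M.submatrix r.succAbove Fin.succ).det = if fL r = j then (u : R) else 0 := by
    intro r
    have hfLr : fL r ∈ L := Finset.orderEmbOfFin_mem L hL r
    have hcardE : (L.erase (fL r)).card = m := by
      rw [Finset.card_erase_of_mem hfLr, hL]
      omega
    have hrows : (fun a : Fin m => fL (r.succAbove a))
        = (L.erase (fL r)).orderEmbOfFin hcardE := by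
      refine Finset.orderEmbOfFin_unique hcardE (fun a => ?_)
        (fL.strictMono.comp (Fin.strictMono_succAbove r))
      refine Finset.mem_erase.2 ⟨fun e => ?_, Finset.orderEmbOfFin_mem L hL _⟩
      exact (Fin.succAbove_ne r a) (fL.injective e)
    have hsub : M.submatrix r.succAbove Fin.succ =
        Matrix.of fun a b : Fin m =>
          h ((L.erase (fL r)).orderEmbOfFin hcardE a) (oeI b) := by
      ext a b
      have hc : col (Fin.succ b) = oeI b := by simp [hcol]
      have hr : fL (r.succAbove a) = (L.erase (fL r)).orderEmbOfFin hcardE a :=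
        congrFun hrows a
      simp only [hM, Matrix.submatrix_apply, Matrix.of_apply, hc, hr]
    rw [hsub]
    have hkey := hyp ⟨L.erase (fL r), hcardE⟩ ⟨I, hI⟩
    rw [extPow] at hkey
    simp only [Matrix.of_apply] at hkey ⊢
    rw [hkey]
    have hiff : (⟨L.erase (fL r), hcardE⟩ : MSub n m) = ⟨I, hI⟩ ↔ fL r = j := by
      constructor
      · intro e
        have e' : L.erase (fL r) = I := Subtype.ext_iff.1 e
        by_contra hne
        have hjmem : j ∈ L.erase (fL r) :=
          Finset.mem_erase.2 ⟨fun e2 => hne e2.symm, by simp [hLdef]⟩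
        rw [e'] at hjmem
        exact hjI hjmem
      · intro e
        apply Subtype.ext
        show L.erase (fL r) = I
        rw [e]
        exact Finset.erase_insert hjI
    by_cases hc : fL r = j
    · rw [if_pos (hiff.2 hc), if_pos hc]
    · rw [if_neg (fun e => hc (hiff.1 e)), if_neg hc]
  -- the sum reduces to one term
  obtain ⟨rj, hrj⟩ : ∃ rj, fL rj = j := by
    have : j ∈ Set.range fL := by
      rw [hfL, Finset.range_orderEmbOfFin]; simp [hLdef]
    exact this
  have hsum : ∑ r : Fin (m + 1), (-1 : R) ^ (r : ℕ) * M r 0 *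
      (M.submatrix r.succAbove Fin.succ).det
      = (-1 : R) ^ (rj : ℕ) * M rj 0 * (u : R) := by
    rw [Finset.sum_eq_single rj]
    · rw [hminor, if_pos hrj]
    · intro b _ hb
      rw [hminor, if_neg (fun e => hb (fL.injective (e.trans hrj.symm)))]
      ring
    · intro habs; exact absurd (Finset.mem_univ rj) habs
  rw [hsum] at hdet0
  have hM0 : M rj 0 = h j i := by simp [hM, hcol, hrj]
  rw [hM0] at hdet0
  -- cancel the sign and the unit
  have hsq : (-1 : R) ^ (rj : ℕ) * (-1 : R) ^ (rj : ℕ) = 1 := by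
    rw [← pow_add, ← two_mul, pow_mul]; norm_num
  have h3 : h j i * (u : R) = 0 := by
    calc h j i * (u : R)
        = ((-1 : R) ^ (rj : ℕ) * (-1 : R) ^ (rj : ℕ)) * (h j i * (u : R)) := by
          rw [hsq, one_mul]
      _ = (-1 : R) ^ (rj : ℕ) * ((-1 : R) ^ (rj : ℕ) * h j i * (u : R)) := by ring
      _ = 0 := by rw [hdet0, mul_zero]
  exact (Units.mul_left_eq_zero u).1 h3

/-- For a unit `u ∈ R^×`, the scalar automorphism `u·id` of `⋀^m R^n` lies in the image
`⋀^m(GL_n(R))` if and only if `u` is an `m`-th power in `R^×`. -/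
theorem scalar_in_exterior_image_iff_power {R : Type*} [CommRing R] (n m : ℕ)
    (hm1 : 1 ≤ m) (hm2 : m ≤ n - 1) (u : Rˣ) :
    (∃ h : Matrix (Fin n) (Fin n) R, IsUnit h.det ∧
      (u : R) • (1 : Matrix (MSub n m) (MSub n m) R) = extPow n m h) ↔
    ∃ v : Rˣ, v ^ m = u := by
  have hn : m + 1 ≤ n := by omega
  constructor
  · rintro ⟨h, -, hE⟩
    have hyp : ∀ I J : MSub n m, extPow n m h I J = if I = J then (u : R) else 0 := by
      intro I J
      rw [← hE]
      simp [Matrix.smul_apply, Matrix.one_apply, mul_ite]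
    -- h is diagonal
    have hdiag : ∀ i j : Fin n, j ≠ i → h j i = 0 := by
      intro i j hji
      obtain ⟨I, hI, hiI, hjI⟩ := exists_mset hm1 hm2 (Ne.symm hji)
      exact offdiag_zero h u hyp I hI hiI hjI
    -- products of diagonal entries over m-sets are all u
    have hprod : ∀ I : Finset (Fin n), ∀ hI : I.card = m, ∏ x ∈ I, h x x = (u : R) := by
      intro I hI
      have hkey := hyp ⟨I, hI⟩ ⟨I, hI⟩
      rw [if_pos rfl, extPow] at hkey
      simp only [Matrix.of_apply] at hkey
      set oeI := I.orderEmbOfFin hI with hoeI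
      have hd : (Matrix.of fun a b : Fin m => h (oeI a) (oeI b)) =
          Matrix.diagonal (fun a => h (oeI a) (oeI a)) := by
        ext a b
        by_cases hab : a = b
        · subst hab; simp
        · rw [Matrix.diagonal_apply_ne _ hab, Matrix.of_apply]
          exact hdiag (oeI b) (oeI a) (fun e => hab (oeI.injective e))
      rw [hd, Matrix.det_diagonal] at hkey
      rw [← hkey]
      exact (prod_orderEmbOfFin' I hI (fun x => h x x)).symm
    -- diagonal entries are all equal
    have hconst : ∀ x y : Fin n, h x x = h y y := by
      intro x y
      by_cases hxy : x = y
      · rw [hxy]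
      obtain ⟨I, hI, hxI, hyI⟩ := exists_mset hm1 hm2 hxy
      have hyI' : y ∉ I.erase x := fun hy => hyI (Finset.mem_of_mem_erase hy)
      have h1 := hprod I hI
      have hIy : (insert y (I.erase x)).card = m := by
        rw [Finset.card_insert_of_notMem hyI', Finset.card_erase_of_mem hxI, hI]
        omega
      have h2 := hprod _ hIy
      rw [Finset.prod_insert hyI'] at h2
      rw [← Finset.mul_prod_erase I _ hxI] at h1
      have hP : IsUnit (∏ z ∈ I.erase x, h z z) :=
        isUnit_of_mul_isUnit_right (h1 ▸ u.isUnit)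
      obtain ⟨P, hPe⟩ := hP
      rw [← hPe] at h1 h2
      calc h x x = h x x * (P : R) * ((P⁻¹ : Rˣ) : R) := by
            rw [mul_assoc, Units.mul_inv, mul_one]
        _ = h y y * (P : R) * ((P⁻¹ : Rˣ) : R) := by rw [h1, h2]
        _ = h y y := by rw [mul_assoc, Units.mul_inv, mul_one]
    -- get the m-th root
    have hnpos : 0 < n := by omega
    let x0 : Fin n := ⟨0, hnpos⟩
    obtain ⟨I, hsub, -, hI⟩ :=
      Finset.exists_subsuperset_card_eq (s := {x0}) (t := (Finset.univ : Finset (Fin n)))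
        (Finset.subset_univ _) (by simpa using hm1) (by simp; omega)
    have hx0I : x0 ∈ I := hsub (by simp)
    have hvm : h x0 x0 ^ m = (u : R) := by
      have := hprod I hI
      rw [Finset.prod_congr rfl (fun x _ => hconst x x0)] at this
      rwa [Finset.prod_const, hI] at this
    have hvu : IsUnit (h x0 x0) := by
      have : IsUnit (h x0 x0 ^ m) := hvm ▸ u.isUnit
      exact (isUnit_pow_iff (by omega)).mp this
    obtain ⟨V, hV⟩ := hvu
    refine ⟨V, Units.ext ?_⟩
    rw [Units.val_pow_eq_pow_val, hV, hvm]
  · rintro ⟨v, hv⟩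
    have hvm : (v : R) ^ m = (u : R) := by
      rw [← Units.val_pow_eq_pow_val, hv]
    refine ⟨(v : R) • (1 : Matrix (Fin n) (Fin n) R), ?_, ?_⟩
    · rw [Matrix.det_smul, Matrix.det_one, mul_one]
      simpa using (v.isUnit.pow (Fintype.card (Fin n)))
    · ext I J
      have hsub : (Matrix.of fun a b : Fin m =>
          ((v : R) • (1 : Matrix (Fin n) (Fin n) R))
            (I.1.orderEmbOfFin I.2 a) (J.1.orderEmbOfFin J.2 b))
          = (v : R) • ((1 : Matrix (Fin n) (Fin n) R).submatrix
              (I.1.orderEmbOfFin I.2) (J.1.orderEmbOfFin J.2)) := by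
        ext a b
        simp [Matrix.smul_apply]
      rw [extPow, Matrix.of_apply, hsub, Matrix.det_smul, Matrix.smul_apply,
        Matrix.one_apply, smul_eq_mul]
      by_cases hIJ : I = J
      · subst hIJ
        have : (1 : Matrix (Fin n) (Fin n) R).submatrix
            (I.1.orderEmbOfFin I.2) (I.1.orderEmbOfFin I.2) = 1 := by
          ext a b
          by_cases hab : a = b
          · subst hab; simp
          · rw [Matrix.one_apply_ne hab, Matrix.submatrix_apply,
              Matrix.one_apply_ne (fun e => hab ((I.1.orderEmbOfFin I.2).injective e))]
        rw [if_pos rfl, this, Matrix.det_one, mul_one, mul_one]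
        rw [Fintype.card_fin, hvm]
      · -- some row of the submatrix is zero
        have hne : ¬ I.1 ⊆ J.1 := by
          intro hss
          exact hIJ (Subtype.ext (Finset.eq_of_subset_of_card_le hss
            (by rw [I.2, J.2])))
        obtain ⟨x, hxI, hxJ⟩ := Finset.not_subset.mp hne
        obtain ⟨a, ha⟩ : ∃ a, I.1.orderEmbOfFin I.2 a = x := by
          have : x ∈ Set.range (I.1.orderEmbOfFin I.2) := by
            rw [Finset.range_orderEmbOfFin]; exact hxI
          exact this
        have hrow : ((1 : Matrix (Fin n) (Fin n) R).submatrix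
            (I.1.orderEmbOfFin I.2) (J.1.orderEmbOfFin J.2)).det = 0 := by
          refine Matrix.det_eq_zero_of_row_eq_zero a (fun b => ?_)
          rw [Matrix.submatrix_apply, ha, Matrix.one_apply_ne]
          intro e
          exact hxJ (e ▸ Finset.orderEmbOfFin_mem J.1 J.2 b)
        rw [if_neg hIJ, hrow, mul_zero, mul_zero]
end
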